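/- Let n ≥ 3 and let D_{2n} be the dihedral group of order 2n with cyclic subgroup ⟨a⟩ ≅ Z_n. Then the number of twin classes of the power graph P_{D_{2n}} equals the number of twin classes of the power graph P_{Z_n} plus 2, i.e., |U(P_{D_{2n}})| = |U(P_{Z_n})| + 2. -/

import Mathlib

open SimpleGraph

/-- `W` is a resolving set for the graph `Γ`: any two distinct vertices are
distinguished by their distance to some element of `W`. -/
def IsResolvingSet {V : Type*} (Γ : SimpleGraph V) (W : Set V) : Prop :=
  ∀ u v : V, u ≠ v → ∃ w ∈ W, Γ.dist u w ≠ Γ.dist v w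

/-- The metric dimension of a graph: the least cardinality of a resolving set. -/
noncomputable def metricDim {V : Type*} (Γ : SimpleGraph V) : ℕ :=
  sInf {n | ∃ W : Set V, W.Finite ∧ W.ncard = n ∧ IsResolvingSet Γ W}

/-- A minimal resolving set: a resolving set no proper subset of which resolves. -/
def IsMinimalResolvingSet {V : Type*} (Γ : SimpleGraph V) (W : Set V) : Prop :=
  IsResolvingSet Γ W ∧ ∀ W' : Set V, W' ⊂ W → ¬ IsResolvingSet Γ W'

/-- Two vertices are twins if they have the same open neighborhood or the same
closed neighborhood. -/
def AreTwins {V : Type*} (Γ : SimpleGraph V) (u v : V) : Prop :=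
  Γ.neighborSet u = Γ.neighborSet v ∨
    insert u (Γ.neighborSet u) = insert v (Γ.neighborSet v)

/-- The twin class of a vertex. -/
def twinClass {V : Type*} (Γ : SimpleGraph V) (u : V) : Set V :=
  {v | AreTwins Γ u v}

/-- The number of twin classes of a graph. -/
noncomputable def twinClassCount {V : Type*} (Γ : SimpleGraph V) : ℕ :=
  {S : Set V | ∃ u : V, S = twinClass Γ u}.ncard

/-- Resolving sets of `Γ` have the exchange property. -/
def HasExchangeProperty {V : Type*} (Γ : SimpleGraph V) : Prop :=
  ∀ W₁ W₂ : Set V, IsMinimalResolvingSet Γ W₁ → IsMinimalResolvingSet Γ W₂ →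
    ∀ u ∈ W₁, ∃ v ∈ W₂, IsMinimalResolvingSet Γ ((W₁ \ {u}) ∪ {v})

/-- The (undirected) power graph of a group `G`: distinct `x`, `y` are adjacent
iff one is a positive power of the other. -/
def powerGraph (G : Type*) [Group G] : SimpleGraph G :=
  SimpleGraph.fromRel (fun x y => ∃ m : ℕ, 0 < m ∧ y = x ^ m)

/-- `R{x,y}`: the set of vertices having different distances to `x` and `y`. -/
def Rset {V : Type*} (Γ : SimpleGraph V) (x y : V) : Set V :=
  {z | Γ.dist x z ≠ Γ.dist y z}

/-!
In the power graph of `D_{2n}` the identity is adjacent to every vertex, a reflection only to the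
identity, and the rotations span a copy of the power graph of `Z_n`. Two vertices are twins iff
they have the same neighbours apart from each other. Hence the reflections form one twin class,
the identity is alone in its class (a reflection other than `v` separates it from `v`), a
reflection and a rotation are separated by a non-trivial neighbour of the rotation (which exists
for `n ≥ 3`), and two non-trivial rotations are twins iff they are twins in `Z_n`. Every twin class
of `Z_n` contains a non-trivial element, because the identity and a generator are both adjacent to
everything; so the twin classes of `D_{2n}` are those of `Z_n`, together with `{1}` and the set
of reflections.
-/

section Twins

variable {V : Type*} {Γ : SimpleGraph V} {u v w : V}

lemma areTwins_iff : AreTwins Γ u v ↔ ∀ w, w ≠ u → w ≠ v → (Γ.Adj u w ↔ Γ.Adj v w) := by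
  constructor
  · rintro (h | h) w hwu hwv
    · simpa only [mem_neighborSet] using Set.ext_iff.1 h w
    · simpa only [Set.mem_insert_iff, mem_neighborSet, hwu, hwv, false_or] using
        Set.ext_iff.1 h w
  · intro h
    by_cases huv : Γ.Adj u v
    · refine Or.inr (Set.ext fun w => ?_)
      by_cases hwu : w = u
      · simp [hwu, huv.symm]
      by_cases hwv : w = v
      · simp [hwv, huv]
      simpa [hwu, hwv] using h w hwu hwv
    · refine Or.inl (Set.ext fun w => ?_)
      by_cases hwu : w = u
      · simpa [hwu, Γ.adj_comm] using huv
      by_cases hwv : w = v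
      · simpa [hwv] using huv
      simpa using h w hwu hwv

lemma areTwins_symm (h : AreTwins Γ u v) : AreTwins Γ v u :=
  h.imp Eq.symm Eq.symm

lemma areTwins_comm : AreTwins Γ u v ↔ AreTwins Γ v u :=
  ⟨areTwins_symm, areTwins_symm⟩

lemma areTwins_trans (huv : AreTwins Γ u v) (hvw : AreTwins Γ v w) : AreTwins Γ u w := by
  rw [areTwins_iff] at *
  intro x hxu hxw
  by_cases hxv : x = v
  · subst hxv
    by_cases huw : u = w
    · rw [huw]
    calc Γ.Adj u x ↔ Γ.Adj w u := Γ.adj_comm u x |>.trans (hvw u (Ne.symm hxu) huw)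
      _ ↔ Γ.Adj x w := Γ.adj_comm w u |>.trans (huv w (Ne.symm huw) (Ne.symm hxw))
      _ ↔ Γ.Adj w x := Γ.adj_comm x w
  · exact (huv x hxu hxv).trans (hvw x hxv hxw)

lemma areTwins_equivalence : Equivalence (AreTwins Γ) :=
  ⟨fun _ => Or.inl rfl, areTwins_symm, areTwins_trans⟩

lemma twinClass_eq_twinClass_iff : twinClass Γ u = twinClass Γ v ↔ AreTwins Γ u v := by
  constructor
  · intro h
    exact (Set.ext_iff.1 h v).2 (areTwins_equivalence.refl v)
  · intro h
    ext w
    exact ⟨areTwins_trans (areTwins_symm h), areTwins_trans h⟩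

lemma twinClassCount_eq_ncard_range_twinClass :
    twinClassCount Γ = (Set.range (twinClass Γ)).ncard := by
  simp only [twinClassCount, Set.range, eq_comm]

lemma twinClassCount_eq_ncard_range {α : Type*} {φ : V → α}
    (hφ : ∀ u v, AreTwins Γ u v ↔ φ u = φ v) : twinClassCount Γ = (Set.range φ).ncard := by
  have hker : Setoid.ker (twinClass Γ) = Setoid.ker φ :=
    Setoid.ext fun u v => twinClass_eq_twinClass_iff.trans (hφ u v)
  rw [twinClassCount_eq_ncard_range_twinClass, ← Nat.card_coe_set_eq, ← Nat.card_coe_set_eq]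
  exact Nat.card_congr <| (Setoid.quotientKerEquivRange _).symm.trans <|
    (Quotient.congr (Equiv.refl V) fun u v => by rw [hker]; rfl).trans
      (Setoid.quotientKerEquivRange φ)

lemma areTwins_of_forall_adj (hu : ∀ w, w ≠ u → Γ.Adj u w) (hv : ∀ w, w ≠ v → Γ.Adj v w) :
    AreTwins Γ u v :=
  areTwins_iff.2 fun w hwu hwv => iff_of_true (hu w hwu) (hv w hwv)

lemma areTwins_map_iff {W : Type*} {Γ' : SimpleGraph W} (e : Γ ↪g Γ')
    (hu : ∀ w, Γ'.Adj (e u) w → w ∈ Set.range e) (hv : ∀ w, Γ'.Adj (e v) w → w ∈ Set.range e) :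
    AreTwins Γ' (e u) (e v) ↔ AreTwins Γ u v := by
  simp only [areTwins_iff]
  constructor
  · intro h w hwu hwv
    simpa only [e.map_adj_iff] using h (e w) (e.injective.ne hwu) (e.injective.ne hwv)
  · intro h w' hwu hwv
    by_cases hw' : w' ∈ Set.range e
    · obtain ⟨w, rfl⟩ := hw'
      simpa only [e.map_adj_iff] using h w (fun h => hwu (h ▸ rfl)) (fun h => hwv (h ▸ rfl))
    · exact iff_of_false (fun h => hw' (hu w' h)) (fun h => hw' (hv w' h))

end Twins

section PowerGraph

variable {G H : Type*} [Group G] [Group H]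

lemma powerGraph_adj {x y : G} :
    (powerGraph G).Adj x y ↔
      x ≠ y ∧ ((∃ m : ℕ, 0 < m ∧ y = x ^ m) ∨ ∃ m : ℕ, 0 < m ∧ x = y ^ m) := by
  simp [powerGraph, SimpleGraph.fromRel_adj]

lemma powerGraph_adj_map_iff {f : H →* G} (hf : Function.Injective f) {x y : H} :
    (powerGraph G).Adj (f x) (f y) ↔ (powerGraph H).Adj x y := by
  simp only [powerGraph_adj, ← map_pow, hf.eq_iff, hf.ne_iff]

def powerGraphEmbedding (f : H →* G) (hf : Function.Injective f) :
    powerGraph H ↪g powerGraph G :=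
  ⟨⟨f, hf⟩, powerGraph_adj_map_iff hf⟩

/-- Positive exponents suffice in a finite group: `g ^ k = g ^ (k + orderOf g)`. -/
lemma powerGraph_adj_of_mem_zpowers [Finite G] {g y : G} (hy : y ∈ Subgroup.zpowers g)
    (hne : g ≠ y) : (powerGraph G).Adj g y := by
  obtain ⟨k, rfl⟩ := mem_powers_iff_mem_zpowers.2 hy
  refine powerGraph_adj.2 ⟨hne, Or.inl ⟨k + orderOf g, Nat.add_pos_right k (orderOf_pos g), ?_⟩⟩
  rw [pow_add, pow_orderOf_eq_one, mul_one]

lemma powerGraph_adj_one [Finite G] {y : G} (hy : y ≠ 1) : (powerGraph G).Adj 1 y :=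
  (powerGraph_adj_of_mem_zpowers (Subgroup.one_mem _) hy).symm

lemma exists_ne_one_powerGraph_adj [Finite G] {g x : G} (hg : 3 ≤ orderOf g)
    (hx : x ∈ Subgroup.zpowers g) : ∃ y, y ≠ 1 ∧ (powerGraph G).Adj x y := by
  have hg1 : g ≠ 1 := fun h => by simp [h] at hg
  by_cases hxg : x = g
  · subst hxg
    refine ⟨x ^ 2, pow_ne_one_of_lt_orderOf two_ne_zero (by omega),
      powerGraph_adj.2 ⟨fun h => hg1 ?_, Or.inl ⟨2, two_pos, rfl⟩⟩⟩
    rwa [pow_two, left_eq_mul] at h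
  · exact ⟨g, hg1, (powerGraph_adj_of_mem_zpowers hx (Ne.symm hxg)).symm⟩

lemma areTwins_one_of_forall_mem_zpowers [Finite G] {g : G}
    (hg : ∀ x, x ∈ Subgroup.zpowers g) : AreTwins (powerGraph G) 1 g :=
  areTwins_of_forall_adj (fun _ => powerGraph_adj_one)
    (fun x hx => powerGraph_adj_of_mem_zpowers (hg x) (Ne.symm hx))

end PowerGraph

section Cyclic

open Multiplicative

variable {n : ℕ}

lemma mem_zpowers_ofAdd_one (x : Multiplicative (ZMod n)) :
    x ∈ Subgroup.zpowers (ofAdd (1 : ZMod n)) :=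
  Subgroup.mem_zpowers_iff.2 ⟨(toAdd x).cast, by
    rw [← ofAdd_zsmul, zsmul_one, ZMod.intCast_zmod_cast, ofAdd_toAdd]⟩

lemma orderOf_ofAdd_one : orderOf (ofAdd (1 : ZMod n)) = n := by
  rw [orderOf_ofAdd_eq_addOrderOf, ZMod.addOrderOf_one]

/-- For `x = 1` take a generator: both are adjacent to every other vertex. -/
lemma exists_ne_one_areTwins_powerGraph [NeZero n] (hn : n ≠ 1) (x : Multiplicative (ZMod n)) :
    ∃ y, y ≠ 1 ∧ AreTwins (powerGraph (Multiplicative (ZMod n))) x y := by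
  have : Nontrivial (ZMod n) := ZMod.nontrivial_iff.2 hn
  by_cases hx : x = 1
  · subst hx
    exact ⟨ofAdd 1, by simp, areTwins_one_of_forall_mem_zpowers mem_zpowers_ofAdd_one⟩
  · exact ⟨x, hx, areTwins_equivalence.refl x⟩

end Cyclic

section Dihedral

open DihedralGroup Multiplicative

variable {n : ℕ}

def rotationHom (n : ℕ) : Multiplicative (ZMod n) →* DihedralGroup n where
  toFun x := r (toAdd x)
  map_one' := rfl
  map_mul' _ _ := (r_mul_r _ _).symm

lemma rotationHom_injective : Function.Injective (rotationHom n) :=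
  fun _ _ h => r.inj h

lemma r_eq_one_iff {i : ZMod n} : (r i : DihedralGroup n) = 1 ↔ i = 0 := by
  rw [one_def, r.injEq]

lemma sr_ne_one (j : ZMod n) : (sr j : DihedralGroup n) ≠ 1 := by
  rw [one_def]; nofun

lemma sr_pow_eq_one_or_eq (j : ZMod n) (m : ℕ) : sr j ^ m = 1 ∨ sr j ^ m = sr j := by
  rw [← pow_mod_orderOf, orderOf_sr]
  rcases Nat.mod_two_eq_zero_or_one m with h | h <;> simp [h]

lemma powerGraph_adj_sr_iff {j : ZMod n} {w : DihedralGroup n} :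
    (powerGraph (DihedralGroup n)).Adj (sr j) w ↔ w = 1 := by
  constructor
  · rintro ⟨hne, ⟨m, -, rfl⟩ | ⟨m, -, hm⟩⟩
    · exact (sr_pow_eq_one_or_eq j m).resolve_right hne.symm
    · cases w with
      | r k => simp [r_pow] at hm
      | sr k =>
        rcases sr_pow_eq_one_or_eq k m with h | h <;> rw [h] at hm
        · cases hm
        · exact absurd hm hne
  · rintro rfl
    exact powerGraph_adj.2 ⟨sr_ne_one j, Or.inl ⟨2, two_pos, by rw [pow_two, sr_mul_self]⟩⟩

lemma mem_range_rotationHom_of_powerGraph_adj {i : ZMod n} (hi : i ≠ 0) {w : DihedralGroup n}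
    (h : (powerGraph (DihedralGroup n)).Adj (r i) w) : w ∈ Set.range (rotationHom n) := by
  cases w with
  | r k => exact ⟨ofAdd k, rfl⟩
  | sr k => exact absurd (r_eq_one_iff.1 (powerGraph_adj_sr_iff.1 h.symm)) hi

lemma areTwins_sr_sr (i j : ZMod n) : AreTwins (powerGraph (DihedralGroup n)) (sr i) (sr j) :=
  Or.inl (Set.ext fun _ => by simp only [mem_neighborSet, powerGraph_adj_sr_iff])

/-- The identity is separated from any other vertex `v` by a reflection other than `v`. -/
lemma areTwins_one_iff (hn : n ≠ 1) {v : DihedralGroup n} :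
    AreTwins (powerGraph (DihedralGroup n)) 1 v ↔ v = 1 := by
  refine ⟨fun h => by_contra fun hv => ?_, by rintro rfl; exact areTwins_equivalence.refl 1⟩
  have : Nontrivial (ZMod n) := ZMod.nontrivial_iff.2 hn
  obtain ⟨j, hj⟩ : ∃ j : ZMod n, sr j ≠ v := by
    by_cases hv0 : v = sr 0
    · exact ⟨1, by simp [hv0]⟩
    · exact ⟨0, Ne.symm hv0⟩
  have := (areTwins_iff.1 h (sr j) (sr_ne_one j) hj).1 (powerGraph_adj_sr_iff.2 rfl).symm
  exact hv (powerGraph_adj_sr_iff.1 this.symm)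

/-- A rotation is separated from a reflection by a neighbour `r k ≠ 1`. -/
lemma not_areTwins_sr_r [NeZero n] (hn : 3 ≤ n) (j i : ZMod n) :
    ¬ AreTwins (powerGraph (DihedralGroup n)) (sr j) (r i) := by
  obtain ⟨y, hy, hadj⟩ := exists_ne_one_powerGraph_adj (orderOf_ofAdd_one.symm ▸ hn)
    (mem_zpowers_ofAdd_one (ofAdd i))
  have hadj' := (powerGraph_adj_map_iff rotationHom_injective).2 hadj
  intro h
  have := (areTwins_iff.1 h (rotationHom n y) (by simp [rotationHom]) hadj'.ne.symm).2 hadj'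
  exact hy ((map_eq_one_iff _ rotationHom_injective).1 (powerGraph_adj_sr_iff.1 this))

lemma areTwins_r_r_iff {i j : ZMod n} (hi : i ≠ 0) (hj : j ≠ 0) :
    AreTwins (powerGraph (DihedralGroup n)) (r i) (r j) ↔
      AreTwins (powerGraph (Multiplicative (ZMod n))) (ofAdd i) (ofAdd j) :=
  areTwins_map_iff (powerGraphEmbedding (rotationHom n) rotationHom_injective)
    (fun _ => mem_range_rotationHom_of_powerGraph_adj hi)
    (fun _ => mem_range_rotationHom_of_powerGraph_adj hj)

/-- `none` marks the identity, `some none` the reflections, and a non-trivial rotation `r i` is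
labelled by the twin class of `i` in the cyclic group. -/
def dihedralTwinLabel (n : ℕ) :
    DihedralGroup n → Option (Option (Set (Multiplicative (ZMod n))))
  | r i => if i = 0 then none else some (some (twinClass (powerGraph _) (ofAdd i)))
  | sr _ => some none

lemma dihedralTwinLabel_eq_none_iff {u : DihedralGroup n} :
    dihedralTwinLabel n u = none ↔ u = 1 := by
  cases u with
  | r i => by_cases hi : i = 0 <;> simp [dihedralTwinLabel, hi, r_eq_one_iff]
  | sr j => simp [dihedralTwinLabel, sr_ne_one]

lemma areTwins_iff_dihedralTwinLabel_eq [NeZero n] (hn : 3 ≤ n) (u v : DihedralGroup n) :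
    AreTwins (powerGraph (DihedralGroup n)) u v ↔
      dihedralTwinLabel n u = dihedralTwinLabel n v := by
  have hn1 : n ≠ 1 := by omega
  have hlabel_one : dihedralTwinLabel n 1 = none := dihedralTwinLabel_eq_none_iff.2 rfl
  rcases eq_or_ne u 1 with rfl | hu
  · rw [areTwins_one_iff hn1, hlabel_one, @eq_comm _ none, dihedralTwinLabel_eq_none_iff]
  rcases eq_or_ne v 1 with rfl | hv
  · rw [areTwins_comm, areTwins_one_iff hn1, hlabel_one, dihedralTwinLabel_eq_none_iff]
  cases u with
  | r i =>
    have hi : i ≠ 0 := mt r_eq_one_iff.2 hu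
    cases v with
    | r j =>
      have hj : j ≠ 0 := mt r_eq_one_iff.2 hv
      simp only [dihedralTwinLabel, hi, hj, if_false, Option.some.injEq, areTwins_r_r_iff hi hj,
        twinClass_eq_twinClass_iff]
    | sr j =>
      exact iff_of_false (fun h => not_areTwins_sr_r hn j i (areTwins_symm h))
        (by simp [dihedralTwinLabel, hi])
  | sr i =>
    cases v with
    | r j =>
      have hj : j ≠ 0 := mt r_eq_one_iff.2 hv
      exact iff_of_false (not_areTwins_sr_r hn i j) (by simp [dihedralTwinLabel, hj])
    | sr j => exact iff_of_true (areTwins_sr_sr i j) rfl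

lemma range_dihedralTwinLabel [NeZero n] (hn : n ≠ 1) :
    Set.range (dihedralTwinLabel n) =
      insert none (insert (some none)
        ((some ∘ some) '' Set.range (twinClass (powerGraph (Multiplicative (ZMod n)))))) := by
  ext o
  constructor
  · rintro ⟨u, rfl⟩
    cases u with
    | r i => by_cases hi : i = 0 <;> simp [dihedralTwinLabel, hi]
    | sr j => simp [dihedralTwinLabel]
  · rintro (rfl | rfl | ⟨_, ⟨x, rfl⟩, rfl⟩)
    · exact ⟨r 0, by simp [dihedralTwinLabel]⟩
    · exact ⟨sr 0, rfl⟩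
    · obtain ⟨y, hy, hxy⟩ := exists_ne_one_areTwins_powerGraph hn x
      refine ⟨r (toAdd y), ?_⟩
      simp [dihedralTwinLabel, hy, twinClass_eq_twinClass_iff.2 hxy]

end Dihedral

/-- `|U(P_{D_{2n}})| = |U(P_{Z_n})| + 2` for `n ≥ 3`. -/
theorem twinClassCount_powerGraph_dihedral (n : ℕ) (hn : 3 ≤ n) :
    twinClassCount (powerGraph (DihedralGroup n)) =
      twinClassCount (powerGraph (Multiplicative (ZMod n))) + 2 := by
  have : NeZero n := ⟨by omega⟩
  rw [twinClassCount_eq_ncard_range (areTwins_iff_dihedralTwinLabel_eq hn),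
    range_dihedralTwinLabel (by omega), Set.ncard_insert_of_notMem (by simp),
    Set.ncard_insert_of_notMem (by simp),
    Set.ncard_image_of_injective _ ((Option.some_injective _).comp (Option.some_injective _)),
    twinClassCount_eq_ncard_range_twinClass]
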